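/- arXiv:1103.2023 — 2 statements merged into one kernel-verified Lean document; each statement's English description precedes it below -/
import Mathlib

section
/- The off-diagonal two-body contribution sum: with n_r as above, ((ω²−μ²)/√(ωμ)) · ∑_{r=0}^∞ √(n_r n_{r+1}) · (r+1)/2 = ((ω²−μ²)/(4μ)) · ((ω−μ)/(2ω)). -/
/-!
Writing `s = √ω`, `t = √μ` and `q = (s - t)/(s + t)`, the occupations are geometric,
`nᵣ = C q^(2r)` with `C = 4st/(s+t)² = 1 - q²`. Hence `√(nᵣ nᵣ₊₁) = C q (q²)^r`, and the
series is `C q/2 · ∑ (r+1)(q²)^r = C q/(2(1 - q²)²) = q/(2C) = (ω - μ)/(8√(ωμ))`.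
-/

open Real

theorem hasSum_succ_mul_geometric {𝕜 : Type*} [NormedDivisionRing 𝕜] [HasSummableGeomSeries 𝕜]
    {x : 𝕜} (hx : ‖x‖ < 1) :
    HasSum (fun r : ℕ => ((r : 𝕜) + 1) * x ^ r) (1 / (1 - x) ^ 2) := by
  simpa using hasSum_choose_mul_geometric_of_norm_lt_one 1 hx

theorem sqrt_geometric_mul_geometric_succ {C q : ℝ} (hC : 0 ≤ C) (hq : 0 ≤ q) (r : ℕ) :
    √(C * q ^ (2 * r) * (C * q ^ (2 * (r + 1)))) = C * q * (q ^ 2) ^ r := by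
  rw [← sqrt_sq (by positivity : 0 ≤ C * q * (q ^ 2) ^ r)]
  congr 1
  ring

theorem hasSum_sqrt_geometric_mul_succ_half {C q : ℝ} (hC : 0 ≤ C) (hq₀ : 0 ≤ q) (hq₁ : q < 1) :
    HasSum (fun r : ℕ => √(C * q ^ (2 * r) * (C * q ^ (2 * (r + 1)))) * ((r + 1) / 2))
      (C * q / (2 * (1 - q ^ 2) ^ 2)) := by
  have hq2 : ‖q ^ 2‖ < 1 := by
    rw [norm_pow, norm_of_nonneg hq₀]
    exact pow_lt_one₀ hq₀ hq₁ two_ne_zero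
  have h := (hasSum_succ_mul_geometric hq2).mul_left (C * q / 2)
  rw [mul_one_div, div_div] at h
  refine h.congr_fun fun r => ?_
  rw [sqrt_geometric_mul_geometric_succ hC hq₀]
  ring

theorem one_sub_sq_sub_div_add {s t : ℝ} (h : s + t ≠ 0) :
    1 - ((s - t) / (s + t)) ^ 2 = 4 * (s * t) / (s + t) ^ 2 := by
  field_simp
  ring

/-- The off-diagonal two-body contribution:
`((ω²−μ²)/√(ωμ)) ∑ᵣ √(nᵣ nᵣ₊₁) (r+1)/2 = ((ω²−μ²)/(4μ))((ω−μ)/(2ω))`. -/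
theorem offdiagonal_two_body_sum (ω μ : ℝ) (hμ : 0 < μ) (hω : μ < ω)
    (n : ℕ → ℝ)
    (hn : ∀ r, n r = (4 * Real.sqrt (ω * μ) / (Real.sqrt ω + Real.sqrt μ) ^ 2) *
        ((Real.sqrt ω - Real.sqrt μ) / (Real.sqrt ω + Real.sqrt μ)) ^ (2 * r)) :
    ((ω ^ 2 - μ ^ 2) / Real.sqrt (ω * μ)) *
        ∑' r : ℕ, Real.sqrt (n r * n (r + 1)) * ((r + 1) / 2) =
      ((ω ^ 2 - μ ^ 2) / (4 * μ)) * ((ω - μ) / (2 * ω)) := by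
  have hω₀ : 0 < ω := hμ.trans hω
  have hωμ : √(ω * μ) = √ω * √μ := sqrt_mul hω₀.le μ
  set s := √ω
  set t := √μ
  have hs₀ : 0 < s := sqrt_pos.2 hω₀
  have ht₀ : 0 < t := sqrt_pos.2 hμ
  have hts : t < s := sqrt_lt_sqrt hμ.le hω
  have hsq : s ^ 2 = ω := sq_sqrt hω₀.le
  have htq : t ^ 2 = μ := sq_sqrt hμ.le
  have hsum := hasSum_sqrt_geometric_mul_succ_half (C := 4 * (s * t) / (s + t) ^ 2)
    (q := (s - t) / (s + t)) (by positivity) (div_nonneg (by linarith) (by linarith))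
    ((div_lt_one (by linarith)).2 (by linarith))
  simp only [← hωμ, ← hn] at hsum
  rw [hsum.tsum_eq, one_sub_sq_sub_div_add (by linarith), hωμ, ← hsq, ← htq]
  field_simp
  ring
end

section
/- The Hartree–Fock energy of three-dimensional harmonium equals 3√((ω²+μ²)/2), i.e. (1/π⁶) ∫ (P²/2 + ω²R²/2 + p²/2 + μ²r²/2) e^{−(R²+r²)√((ω²+μ²)/2)} e^{−(P²+p²)/√((ω²+μ²)/2)} d³P d³R d³p d³r = 3√((ω²+μ²)/2). -/
/-!
The integrand is a sum of quadratic energies `a ‖v‖²` against a product of isotropic Gaussian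
weights `exp (-c ‖v‖²)`, so by Fubini each term factorizes. In polar coordinates the second moment
of `exp (-c ‖v‖²)` on a `d`-dimensional space is `d / (2c)` times its mass, by
`Γ(d/2 + 1) = (d/2) Γ(d/2)`. With `s = √((ω² + μ²)/2)` the momenta carry the weight `exp (-‖v‖²/s)`
and the positions `exp (-s ‖v‖²)`, whose masses `(π s)^{3/2}` and `(π/s)^{3/2}` multiply to `π³`,
cancelling the prefactor `π⁻⁶`; what remains is `3s/2 + 3(ω² + μ²)/(4s) = 3s`.
-/

open Real MeasureTheory Set Module

theorem integral_rpow_add_two_mul_exp_neg_mul_sq_Ioi {q b : ℝ} (hq : -1 < q) (hb : 0 < b) :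
    ∫ x in Ioi (0 : ℝ), x ^ (q + 2) * exp (-b * x ^ 2) =
      (q + 1) / (2 * b) * ∫ x in Ioi (0 : ℝ), x ^ q * exp (-b * x ^ 2) := by
  have hq' : (q + 1) / 2 ≠ 0 := by linarith
  simp_rw [← rpow_two]
  rw [integral_rpow_mul_exp_neg_mul_rpow two_pos (by linarith) hb,
    integral_rpow_mul_exp_neg_mul_rpow two_pos hq hb,
    show (q + 2 + 1) / 2 = (q + 1) / 2 + 1 by ring, Gamma_add_one hq',
    show -(q + 2 + 1) / 2 = -(q + 1) / 2 - 1 by ring, rpow_sub_one hb.ne']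
  field_simp

section Prod

variable {α β : Type*} [MeasurableSpace α] [MeasurableSpace β] {μ : Measure α} {ν : Measure β}
  {f u : α → ℝ} {g v : β → ℝ}

theorem integrable_add_mul_mul_prod (hf : Integrable f μ)
    (huf : Integrable (fun a => u a * f a) μ) (hg : Integrable g ν)
    (hvg : Integrable (fun b => v b * g b) ν) :
    Integrable (fun z : α × β => (u z.1 + v z.2) * (f z.1 * g z.2)) (μ.prod ν) := by
  refine ((huf.mul_prod hg).add (hf.mul_prod hvg)).congr (ae_of_all _ fun z => ?_)
  simp only [Pi.add_apply]
  ring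

theorem integral_add_mul_mul_prod [SFinite μ] [SFinite ν] (hf : Integrable f μ)
    (huf : Integrable (fun a => u a * f a) μ) (hg : Integrable g ν)
    (hvg : Integrable (fun b => v b * g b) ν) :
    ∫ z, (u z.1 + v z.2) * (f z.1 * g z.2) ∂μ.prod ν =
      (∫ a, u a * f a ∂μ) * (∫ b, g b ∂ν) + (∫ a, f a ∂μ) * ∫ b, v b * g b ∂ν := by
  have split (z : α × β) : (u z.1 + v z.2) * (f z.1 * g z.2) =
      u z.1 * f z.1 * g z.2 + f z.1 * (v z.2 * g z.2) := by ring
  simp_rw [split]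
  rw [integral_add (huf.mul_prod hg) (hf.mul_prod hvg), integral_prod_mul (fun a => u a * f a) g,
    integral_prod_mul f (fun b => v b * g b)]

end Prod

noncomputable def gaussianWeight {E : Type*} [Norm E] (c : ℝ) (x : E) : ℝ := exp (-c * ‖x‖ ^ 2)

section Haar

variable {E : Type*} [NormedAddCommGroup E] [NormedSpace ℝ E] [FiniteDimensional ℝ E]
  [MeasurableSpace E] [BorelSpace E] (μ : Measure E) [μ.IsAddHaarMeasure] {c : ℝ}

theorem integrable_pow_norm_mul_gaussianWeight (k : ℕ) (hc : 0 < c) :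
    Integrable (fun x : E => ‖x‖ ^ k * gaussianWeight c x) μ := by
  obtain hE | hE := subsingleton_or_nontrivial E
  · simp only [Subsingleton.elim _ (0 : E)]
    exact integrable_const _
  simp only [gaussianWeight]
  rw [integrable_fun_norm_addHaar μ (f := fun y => y ^ k * exp (-c * y ^ 2))]
  refine (integrableOn_rpow_mul_exp_neg_mul_sq hc (s := ((finrank ℝ E - 1 + k : ℕ) : ℝ))
    (neg_one_lt_zero.trans_le (Nat.cast_nonneg _))).congr_fun (fun y _ => ?_) measurableSet_Ioi
  simp only [rpow_natCast, pow_add, smul_eq_mul, mul_assoc]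

theorem integrable_gaussianWeight (hc : 0 < c) : Integrable (gaussianWeight c : E → ℝ) μ := by
  simpa using integrable_pow_norm_mul_gaussianWeight μ 0 hc

theorem integrable_mul_sq_norm_mul_gaussianWeight (a : ℝ) (hc : 0 < c) :
    Integrable (fun x : E => a * ‖x‖ ^ 2 * gaussianWeight c x) μ := by
  simpa only [mul_assoc] using (integrable_pow_norm_mul_gaussianWeight μ 2 hc).const_mul a

theorem integral_sq_norm_mul_gaussianWeight (hc : 0 < c) :
    ∫ x, ‖x‖ ^ 2 * gaussianWeight c x ∂μ = finrank ℝ E / (2 * c) * ∫ x, gaussianWeight c x ∂μ := by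
  obtain hE | hE := subsingleton_or_nontrivial E
  · simp [finrank_zero_of_subsingleton, Subsingleton.elim _ (0 : E), gaussianWeight]
  obtain ⟨n, hn⟩ := Nat.exists_eq_add_one_of_ne_zero (finrank_pos (R := ℝ) (M := E)).ne'
  have radial (f : ℝ → ℝ) (r : ℝ) (hf : ∀ y, f y = y ^ r * exp (-c * y ^ 2)) :
      ∫ y in Ioi (0 : ℝ), y ^ (finrank ℝ E - 1) • f y =
        ∫ y in Ioi (0 : ℝ), y ^ ((n : ℝ) + r) * exp (-c * y ^ 2) := by
    refine setIntegral_congr_fun measurableSet_Ioi fun y hy => ?_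
    rw [hf, smul_eq_mul, rpow_add hy, hn, Nat.add_sub_cancel, rpow_natCast, mul_assoc]
  simp only [gaussianWeight]
  rw [integral_fun_norm_addHaar μ (fun y => y ^ 2 * exp (-c * y ^ 2)),
    integral_fun_norm_addHaar μ (fun y => exp (-c * y ^ 2)),
    radial _ 2 fun y => by rw [rpow_two], radial _ 0 fun y => by rw [rpow_zero, one_mul], add_zero,
    integral_rpow_add_two_mul_exp_neg_mul_sq_Ioi (neg_one_lt_zero.trans_le n.cast_nonneg) hc, hn]
  simp only [nsmul_eq_mul, smul_eq_mul, Nat.cast_add, Nat.cast_one]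
  ring

theorem integral_mul_sq_norm_mul_gaussianWeight (a : ℝ) (hc : 0 < c) :
    ∫ x, a * ‖x‖ ^ 2 * gaussianWeight c x ∂μ =
      a * (finrank ℝ E / (2 * c)) * ∫ x, gaussianWeight c x ∂μ := by
  simp only [mul_assoc, integral_const_mul]
  rw [integral_sq_norm_mul_gaussianWeight μ hc]

theorem integral_sum_sq_norm_mul_gaussianWeight_prod₄ (a b c d : ℝ) {s t : ℝ} (hs : 0 < s)
    (ht : 0 < t) :
    ∫ x, (a * ‖x.1‖ ^ 2 + (b * ‖x.2.1‖ ^ 2 + (c * ‖x.2.2.1‖ ^ 2 + d * ‖x.2.2.2‖ ^ 2))) *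
        (gaussianWeight t x.1 * (gaussianWeight s x.2.1 *
          (gaussianWeight t x.2.2.1 * gaussianWeight s x.2.2.2))) ∂μ.prod (μ.prod (μ.prod μ)) =
      finrank ℝ E / 2 * ((a + c) / t + (b + d) / s) *
        ((∫ x, gaussianWeight t x ∂μ) * ∫ x, gaussianWeight s x ∂μ) ^ 2 := by
  have G {r : ℝ} (hr : 0 < r) := integrable_gaussianWeight μ hr
  have Q (k : ℝ) {r : ℝ} (hr : 0 < r) := integrable_mul_sq_norm_mul_gaussianWeight μ k hr
  rw [integral_add_mul_mul_prod (G ht) (Q _ ht) ((G hs).mul_prod ((G ht).mul_prod (G hs)))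
      (integrable_add_mul_mul_prod (G hs) (Q _ hs) ((G ht).mul_prod (G hs))
        (integrable_add_mul_mul_prod (G ht) (Q _ ht) (G hs) (Q _ hs))),
    integral_add_mul_mul_prod (G hs) (Q _ hs) ((G ht).mul_prod (G hs))
      (integrable_add_mul_mul_prod (G ht) (Q _ ht) (G hs) (Q _ hs)),
    integral_add_mul_mul_prod (G ht) (Q _ ht) (G hs) (Q _ hs),
    integral_prod_mul (gaussianWeight s) fun y : E × E =>
      gaussianWeight t y.1 * gaussianWeight s y.2,
    integral_prod_mul (gaussianWeight t) (gaussianWeight s)]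
  simp only [integral_mul_sq_norm_mul_gaussianWeight μ _ hs,
    integral_mul_sq_norm_mul_gaussianWeight μ _ ht]
  field_simp
  ring

end Haar

theorem integral_gaussianWeight_mul_integral_gaussianWeight_inv
    {V : Type*} [NormedAddCommGroup V] [InnerProductSpace ℝ V] [FiniteDimensional ℝ V]
    [MeasurableSpace V] [BorelSpace V] {c : ℝ} (hc : 0 < c) :
    (∫ v : V, gaussianWeight c v) * ∫ v : V, gaussianWeight c⁻¹ v = π ^ finrank ℝ V := by
  simp only [gaussianWeight]
  rw [GaussianFourier.integral_rexp_neg_mul_sq_norm hc,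
    GaussianFourier.integral_rexp_neg_mul_sq_norm (inv_pos.2 hc),
    ← mul_rpow (by positivity) (by positivity), show π / c * (π / c⁻¹) = π ^ 2 by field_simp,
    ← rpow_natCast, ← rpow_mul pi_pos.le, Nat.cast_two,
    show (2 : ℝ) * (finrank ℝ V / 2) = finrank ℝ V by ring, rpow_natCast]

local notation "ℝ³" => EuclideanSpace ℝ (Fin 3)

/-- The Hartree–Fock energy of three-dimensional harmonium equals
`3√((ω²+μ²)/2)`. -/
theorem hartree_fock_energy (ω μ : ℝ) (hω : 0 < ω) (hμ : 0 < μ) :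
    (1 / Real.pi ^ 6) *
      ∫ x : EuclideanSpace ℝ (Fin 3) × EuclideanSpace ℝ (Fin 3) ×
             EuclideanSpace ℝ (Fin 3) × EuclideanSpace ℝ (Fin 3),
        (‖x.1‖ ^ 2 / 2 + ω ^ 2 * ‖x.2.1‖ ^ 2 / 2 +
          ‖x.2.2.1‖ ^ 2 / 2 + μ ^ 2 * ‖x.2.2.2‖ ^ 2 / 2) *
          Real.exp (-(‖x.2.1‖ ^ 2 + ‖x.2.2.2‖ ^ 2) * Real.sqrt ((ω ^ 2 + μ ^ 2) / 2)) *
          Real.exp (-(‖x.1‖ ^ 2 + ‖x.2.2.1‖ ^ 2) / Real.sqrt ((ω ^ 2 + μ ^ 2) / 2)) =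
    3 * Real.sqrt ((ω ^ 2 + μ ^ 2) / 2) := by
  set s := √((ω ^ 2 + μ ^ 2) / 2)
  have hs : 0 < s := by positivity
  have hs2 : s ^ 2 = (ω ^ 2 + μ ^ 2) / 2 := sq_sqrt (by positivity)
  have hZ := integral_gaussianWeight_mul_integral_gaussianWeight_inv (V := ℝ³) hs
  rw [finrank_euclideanSpace_fin] at hZ
  rw [integral_congr_ae (g := fun x : ℝ³ × ℝ³ × ℝ³ × ℝ³ =>
      (2⁻¹ * ‖x.1‖ ^ 2 + (ω ^ 2 / 2 * ‖x.2.1‖ ^ 2 +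
        (2⁻¹ * ‖x.2.2.1‖ ^ 2 + μ ^ 2 / 2 * ‖x.2.2.2‖ ^ 2))) *
        (gaussianWeight s⁻¹ x.1 * (gaussianWeight s x.2.1 *
          (gaussianWeight s⁻¹ x.2.2.1 * gaussianWeight s x.2.2.2)))) (ae_of_all _ fun x => ?_)]
  · simp only [Measure.volume_eq_prod]
    rw [integral_sum_sq_norm_mul_gaussianWeight_prod₄ _ _ _ _ _ hs (inv_pos.2 hs),
      mul_comm (∫ _, _), hZ, finrank_euclideanSpace_fin, Nat.cast_ofNat]
    field_simp
    linear_combination -2 * hs2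
  · simp only [gaussianWeight, ← exp_add, mul_assoc]
    congr 1
    · ring
    · congr 1
      field_simp
      ring
end
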